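/- Let X be a real-valued integrable random variable, F a sub-σ-algebra, Y = X − E(X|F), p ≥ 1 and ε > 0. Then E(|Y|^p · 1_{|Y| > 4ε}) ≤ 3 · 2^p · E(|X|^p · 1_{|X| > ε}). -/

import Mathlib

/-!
On `{|X - Z| > 4ε}`, with `Z = E[X|F]`, the larger of `|X|`, `|Z|` exceeds `2ε` and bounds
`|X - Z| / 2`, so the left side is at most `2^p (E[|X|^p; |X| > 2ε] + E[|Z|^p; |Z| > 2ε])`.
The set `B = {|Z| > 2ε}` is `F`-measurable, so conditional Jensen gives
`E[|Z|^p; B] ≤ E[|X|^p; B] ≤ E[|X|^p; |X| > ε] + ε^p P(B)`. Finally, since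
`|Z| ≤ E[|X| | F] ≤ ε + E[|X| 1_{|X| > ε} | F]`, on `B` the last conditional expectation exceeds
`ε`, whence the Markov-type bound `ε P(B) ≤ E[|X|; |X| > ε]` and `ε^p P(B) ≤ E[|X|^p; |X| > ε]`.
-/

open MeasureTheory

lemma rpow_sub_one_mul_le_rpow {c x p : ℝ} (hp : 1 ≤ p) (hc : 0 < c) (hcx : c ≤ x) :
    c ^ (p - 1) * x ≤ x ^ p := by
  calc c ^ (p - 1) * x ≤ x ^ (p - 1) * x := by
        gcongr
        linarith
    _ = x ^ p := by rw [Real.rpow_sub_one (hc.trans_le hcx).ne', div_mul_cancel₀ _ (by linarith)]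

lemma rpow_abs_sub_le_of_abs_le {x z c p : ℝ} (hp : 0 ≤ p) (hzx : |z| ≤ |x|)
    (h : 4 * c < |x - z|) : 2 * c < |x| ∧ |x - z| ^ p ≤ 2 ^ p * |x| ^ p := by
  have hle : |x - z| ≤ 2 * |x| := by linarith [abs_sub x z]
  refine ⟨by linarith, ?_⟩
  calc |x - z| ^ p ≤ (2 * |x|) ^ p := by gcongr
    _ = 2 ^ p * |x| ^ p := Real.mul_rpow zero_le_two (abs_nonneg x)

lemma indicator_rpow_abs_sub_le {p : ℝ} (hp : 0 ≤ p) (c x z : ℝ) :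
    {t : ℝ | 4 * c < |t|}.indicator (|·| ^ p) (x - z)
      ≤ 2 ^ p * ({t : ℝ | 2 * c < |t|}.indicator (|·| ^ p) x
        + {t : ℝ | 2 * c < |t|}.indicator (|·| ^ p) z) := by
  have hx : 0 ≤ {t : ℝ | 2 * c < |t|}.indicator (|·| ^ p) x :=
    Set.indicator_nonneg (fun t _ => by positivity) x
  have hz : 0 ≤ {t : ℝ | 2 * c < |t|}.indicator (|·| ^ p) z :=
    Set.indicator_nonneg (fun t _ => by positivity) z
  by_cases h : x - z ∈ {t : ℝ | 4 * c < |t|}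
  swap
  · rw [Set.indicator_of_notMem h]
    positivity
  rw [Set.indicator_of_mem h]
  rcases le_total |z| |x| with hzx | hxz
  · obtain ⟨hcx, hle⟩ := rpow_abs_sub_le_of_abs_le hp hzx h
    rw [Set.indicator_of_mem (s := {t : ℝ | 2 * c < |t|}) hcx]
    exact hle.trans (by gcongr; exact le_add_of_nonneg_right hz)
  · obtain ⟨hcz, hle⟩ := rpow_abs_sub_le_of_abs_le hp hxz (c := c) (by rwa [abs_sub_comm])
    rw [abs_sub_comm, Set.indicator_of_mem (s := {t : ℝ | 2 * c < |t|}) hcz]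
    exact hle.trans (by gcongr; exact le_add_of_nonneg_left hx)

section

variable {Ω : Type*} {m m0 : MeasurableSpace Ω} {μ : Measure Ω} {X : Ω → ℝ} {c p : ℝ}

lemma nullMeasurableSet_lt_abs {f : Ω → ℝ} (hf : AEStronglyMeasurable f μ) (c : ℝ) :
    NullMeasurableSet {ω | c < |f ω|} μ :=
  nullMeasurableSet_lt aemeasurable_const hf.aemeasurable.abs

lemma setIntegral_rpow_abs_sub_le (hp : 0 ≤ p) {f g : Ω → ℝ}
    (hf : AEStronglyMeasurable f μ) (hg : AEStronglyMeasurable g μ)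
    (hfp : Integrable (fun ω => |f ω| ^ p) μ) (hgp : Integrable (fun ω => |g ω| ^ p) μ) :
    ∫ ω in {ω | 4 * c < |f ω - g ω|}, |f ω - g ω| ^ p ∂μ
      ≤ 2 ^ p * ((∫ ω in {ω | 2 * c < |f ω|}, |f ω| ^ p ∂μ)
        + ∫ ω in {ω | 2 * c < |g ω|}, |g ω| ^ p ∂μ) := by
  have hF := nullMeasurableSet_lt_abs hf (2 * c)
  have hG := nullMeasurableSet_lt_abs hg (2 * c)
  rw [← integral_indicator₀ (nullMeasurableSet_lt_abs (f := fun ω => f ω - g ω) (hf.sub hg) _),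
    ← integral_indicator₀ hF, ← integral_indicator₀ hG,
    ← integral_add (hfp.indicator₀ hF) (hgp.indicator₀ hG), ← integral_const_mul]
  exact integral_mono_of_nonneg
    (ae_of_all _ fun ω => Set.indicator_nonneg (fun _ _ => by positivity) _)
    (((hfp.indicator₀ hF).add (hgp.indicator₀ hG)).const_mul _)
    (ae_of_all _ fun ω => indicator_rpow_abs_sub_le hp c (f ω) (g ω))

lemma setIntegral_rpow_abs_le_add_measureReal [IsFiniteMeasure μ] (hp : 0 ≤ p) (hc : 0 ≤ c)
    (hX : AEStronglyMeasurable X μ) (hXp : Integrable (fun ω => |X ω| ^ p) μ) (s : Set Ω) :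
    ∫ ω in s, |X ω| ^ p ∂μ ≤ (∫ ω in {ω | c < |X ω|}, |X ω| ^ p ∂μ) + c ^ p * μ.real s := by
  have hA := nullMeasurableSet_lt_abs hX c
  have hpoint : ∀ ω, |X ω| ^ p ≤ {ω | c < |X ω|}.indicator (|X ·| ^ p) ω + c ^ p := by
    intro ω
    by_cases hω : ω ∈ {ω | c < |X ω|}
    · rw [Set.indicator_of_mem hω]
      have : 0 ≤ c ^ p := Real.rpow_nonneg hc p
      linarith
    · rw [Set.indicator_of_notMem hω, zero_add]
      exact Real.rpow_le_rpow (abs_nonneg _) (not_lt.mp hω) hp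
  calc ∫ ω in s, |X ω| ^ p ∂μ
      ≤ ∫ ω in s, ({ω | c < |X ω|}.indicator (|X ·| ^ p) ω + c ^ p) ∂μ :=
        setIntegral_mono hXp.integrableOn
          ((hXp.indicator₀ hA).add (integrable_const _)).integrableOn hpoint
    _ = (∫ ω in s, {ω | c < |X ω|}.indicator (|X ·| ^ p) ω ∂μ) + c ^ p * μ.real s := by
        rw [integral_add (hXp.indicator₀ hA).integrableOn (integrable_const _).integrableOn,
          setIntegral_const, smul_eq_mul, mul_comm]
    _ ≤ (∫ ω, {ω | c < |X ω|}.indicator (|X ·| ^ p) ω ∂μ) + c ^ p * μ.real s :=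
        add_le_add_left (setIntegral_le_integral (hXp.indicator₀ hA)
          (ae_of_all _ (Set.indicator_nonneg fun _ _ => by positivity))) _
    _ = (∫ ω in {ω | c < |X ω|}, |X ω| ^ p ∂μ) + c ^ p * μ.real s := by
        rw [integral_indicator₀ hA]

lemma rpow_abs_condExp_ae_le (hp : 1 ≤ p) (hXp : Integrable (fun ω => |X ω| ^ p) μ) :
    (fun ω => |μ[X|m] ω| ^ p) ≤ᵐ[μ] μ[fun ω => |X ω| ^ p|m] := by
  have hXp' : Integrable (fun ω => ‖X ω‖ ^ p) μ := by simpa only [Real.norm_eq_abs] using hXp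
  simpa only [Real.norm_eq_abs] using Integrable.norm_condExp_rpow_le (f := X) (m := m) hp hXp'

lemma integrable_rpow_abs_condExp (hm : m ≤ m0) (hp : 1 ≤ p)
    (hXp : Integrable (fun ω => |X ω| ^ p) μ) :
    Integrable (fun ω => |μ[X|m] ω| ^ p) μ := by
  refine (integrable_condExp (m := m) (f := fun ω => |X ω| ^ p)).mono' ?_ ?_
  · have hZ : AEStronglyMeasurable (μ[X|m]) μ :=
      (stronglyMeasurable_condExp.mono hm).aestronglyMeasurable
    have : 0 ≤ p := by linarith
    fun_prop
  · filter_upwards [rpow_abs_condExp_ae_le hp hXp] with ω hω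
    rwa [Real.norm_of_nonneg (by positivity)]

lemma setIntegral_rpow_abs_condExp_le (hm : m ≤ m0) [SigmaFinite (μ.trim hm)] (hp : 1 ≤ p)
    (hXp : Integrable (fun ω => |X ω| ^ p) μ) {s : Set Ω} (hs : MeasurableSet[m] s) :
    ∫ ω in s, |μ[X|m] ω| ^ p ∂μ ≤ ∫ ω in s, |X ω| ^ p ∂μ :=
  calc ∫ ω in s, |μ[X|m] ω| ^ p ∂μ ≤ ∫ ω in s, μ[fun ω => |X ω| ^ p|m] ω ∂μ :=
        setIntegral_mono_ae (integrable_rpow_abs_condExp hm hp hXp).integrableOn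
          integrable_condExp.integrableOn (rpow_abs_condExp_ae_le hp hXp)
    _ = ∫ ω in s, |X ω| ^ p ∂μ := setIntegral_condExp hm hXp hs

lemma measurableSet_lt_abs_condExp (c : ℝ) : MeasurableSet[m] {ω | c < |μ[X|m] ω|} :=
  measurable_abs.comp stronglyMeasurable_condExp.measurable measurableSet_Ioi

lemma mul_measureReal_lt_abs_condExp_le [IsFiniteMeasure μ] (hm : m ≤ m0) (hc : 0 ≤ c)
    (hX : Integrable X μ) :
    c * μ.real {ω | 2 * c < |μ[X|m] ω|} ≤ ∫ ω in {ω | c < |X ω|}, |X ω| ∂μ := by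
  set A := {ω | c < |X ω|}
  set B := {ω | 2 * c < |μ[X|m] ω|}
  have hA := nullMeasurableSet_lt_abs hX.1 c
  have hB : MeasurableSet[m] B := measurableSet_lt_abs_condExp (2 * c)
  set g := A.indicator (|X ·|)
  have hg : Integrable g μ := hX.norm.indicator₀ hA
  have hXg : ∀ ω, |X ω| ≤ c + g ω := by
    intro ω
    by_cases hω : ω ∈ A
    · simp [g, Set.indicator_of_mem hω, hc]
    · simpa [g, Set.indicator_of_notMem hω] using not_lt.mp hω
  have hcond : ∀ᵐ ω ∂μ, |μ[X|m] ω| ≤ c + μ[g|m] ω := by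
    filter_upwards [abs_condExp_ae_le_condExp_abs (m := m) X,
      condExp_mono (m := m) hX.abs ((integrable_const c).add hg) (ae_of_all _ hXg),
      condExp_add (m := m) (integrable_const c) hg] with ω h1 h2 h3
    rw [h3, Pi.add_apply, condExp_const hm] at h2
    exact h1.trans h2
  calc c * μ.real B = ∫ _ in B, c ∂μ := by rw [setIntegral_const, smul_eq_mul, mul_comm]
    _ ≤ ∫ ω in B, μ[g|m] ω ∂μ := by
        refine setIntegral_mono_ae_restrict (integrable_const c).integrableOn
          integrable_condExp.integrableOn ?_
        filter_upwards [ae_restrict_mem (hm _ hB), ae_restrict_of_ae hcond] with ω hω h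
        have : 2 * c < |μ[X|m] ω| := hω
        linarith
    _ = ∫ ω in B, g ω ∂μ := setIntegral_condExp hm hg hB
    _ ≤ ∫ ω, g ω ∂μ := setIntegral_le_integral hg
        (ae_of_all _ (Set.indicator_nonneg fun _ _ => abs_nonneg _))
    _ = ∫ ω in A, |X ω| ∂μ := integral_indicator₀ hA

lemma rpow_mul_measureReal_lt_abs_condExp_le [IsFiniteMeasure μ] (hm : m ≤ m0) (hp : 1 ≤ p)
    (hc : 0 < c) (hX : Integrable X μ) (hXp : Integrable (fun ω => |X ω| ^ p) μ) :
    c ^ p * μ.real {ω | 2 * c < |μ[X|m] ω|} ≤ ∫ ω in {ω | c < |X ω|}, |X ω| ^ p ∂μ :=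
  calc c ^ p * μ.real {ω | 2 * c < |μ[X|m] ω|}
      = c ^ (p - 1) * (c * μ.real {ω | 2 * c < |μ[X|m] ω|}) := by
        rw [← mul_assoc, ← Real.rpow_add_one hc.ne', sub_add_cancel]
    _ ≤ c ^ (p - 1) * ∫ ω in {ω | c < |X ω|}, |X ω| ∂μ := by
        gcongr
        exact mul_measureReal_lt_abs_condExp_le hm hc.le hX
    _ = ∫ ω in {ω | c < |X ω|}, c ^ (p - 1) * |X ω| ∂μ := (integral_const_mul _ _).symm
    _ ≤ ∫ ω in {ω | c < |X ω|}, |X ω| ^ p ∂μ := by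
        refine setIntegral_mono_ae_restrict (hX.norm.const_mul _).integrableOn hXp.integrableOn ?_
        filter_upwards [ae_restrict_mem₀ (nullMeasurableSet_lt_abs hX.1 c)] with ω hω
        exact rpow_sub_one_mul_le_rpow hp hc (le_of_lt hω)

lemma setIntegral_rpow_abs_condExp_gt_le [IsFiniteMeasure μ] (hm : m ≤ m0) (hp : 1 ≤ p)
    (hc : 0 < c) (hX : Integrable X μ) (hXp : Integrable (fun ω => |X ω| ^ p) μ) :
    ∫ ω in {ω | 2 * c < |μ[X|m] ω|}, |μ[X|m] ω| ^ p ∂μ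
      ≤ 2 * ∫ ω in {ω | c < |X ω|}, |X ω| ^ p ∂μ :=
  calc ∫ ω in {ω | 2 * c < |μ[X|m] ω|}, |μ[X|m] ω| ^ p ∂μ
      ≤ ∫ ω in {ω | 2 * c < |μ[X|m] ω|}, |X ω| ^ p ∂μ :=
        setIntegral_rpow_abs_condExp_le hm hp hXp (measurableSet_lt_abs_condExp _)
    _ ≤ (∫ ω in {ω | c < |X ω|}, |X ω| ^ p ∂μ) + c ^ p * μ.real {ω | 2 * c < |μ[X|m] ω|} :=
        setIntegral_rpow_abs_le_add_measureReal (by linarith) hc.le hX.1 hXp _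
    _ ≤ (∫ ω in {ω | c < |X ω|}, |X ω| ^ p ∂μ) + ∫ ω in {ω | c < |X ω|}, |X ω| ^ p ∂μ :=
        add_le_add_right (rpow_mul_measureReal_lt_abs_condExp_le hm hp hc hX hXp) _
    _ = 2 * ∫ ω in {ω | c < |X ω|}, |X ω| ^ p ∂μ := by ring

end

/-- Lemma "curiouslma", third inequality: with `Y = X − E(X|F)`,
`E(|Y|^p · 1_{|Y| > 4ε}) ≤ 3 · 2^p · E(|X|^p · 1_{|X| > ε})`. -/
theorem stmt2 {Ω : Type*} {m0 : MeasurableSpace Ω} (μ : Measure Ω) [IsProbabilityMeasure μ]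
    (m : MeasurableSpace Ω) (hm : m ≤ m0) (X : Ω → ℝ) (hX : Integrable X μ)
    (p : ℝ) (hp : 1 ≤ p) (hXp : Integrable (fun ω => |X ω| ^ p) μ)
    (ε : ℝ) (hε : 0 < ε)
    (Y : Ω → ℝ) (hY : Y = fun ω => X ω - (μ[X|m]) ω) :
    ∫ ω in {ω | 4 * ε < |Y ω|}, |Y ω| ^ p ∂μ
      ≤ 3 * 2 ^ p * ∫ ω in {ω | ε < |X ω|}, |X ω| ^ p ∂μ := by
  subst hY
  set I := ∫ ω in {ω | ε < |X ω|}, |X ω| ^ p ∂μ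
  have hXI : ∫ ω in {ω | 2 * ε < |X ω|}, |X ω| ^ p ∂μ ≤ I :=
    setIntegral_mono_set hXp.integrableOn (ae_of_all _ fun _ => by positivity)
      (ae_of_all _ fun ω (h : 2 * ε < |X ω|) => show ε < |X ω| by linarith)
  calc ∫ ω in {ω | 4 * ε < |X ω - μ[X|m] ω|}, |X ω - μ[X|m] ω| ^ p ∂μ
      ≤ 2 ^ p * ((∫ ω in {ω | 2 * ε < |X ω|}, |X ω| ^ p ∂μ)
        + ∫ ω in {ω | 2 * ε < |μ[X|m] ω|}, |μ[X|m] ω| ^ p ∂μ) :=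
        setIntegral_rpow_abs_sub_le (by linarith) hX.1
          (stronglyMeasurable_condExp.mono hm).aestronglyMeasurable hXp
          (integrable_rpow_abs_condExp hm hp hXp)
    _ ≤ 2 ^ p * (I + 2 * I) := by
        gcongr
        exact setIntegral_rpow_abs_condExp_gt_le hm hp hε hX hXp
    _ = 3 * 2 ^ p * I := by ring
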